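/- For coprime positive integers $a$ and $b$, the classical Dedekind sum and Zagier's higher-dimensional Dedekind sum are related by $s(a,b) = -\frac{1}{4} s(b; a, 1)$, i.e. $\sum_{k=0}^{b-1} ((ka/b))((k/b)) = \frac{1}{4b}\sum_{k=1}^{b-1} \cot\frac{\pi k a}{b}\cot\frac{\pi k}{b}$. -/

import Mathlib

open Finset Classical in
/-- The sawtooth function `((x))`. -/
noncomputable def saw (x : ℝ) : ℝ :=
  if ∃ m : ℤ, (m : ℝ) = x then 0 else Int.fract x - 1/2

/-!
Sample the sawtooth on `ZMod b`, `Φ j = ((j / b))`. Summing the arithmetico-geometric series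
`∑ (j / b - 1 / 2) ζ ^ j` over a `b`-th root of unity `ζ ≠ 1` shows that its discrete Fourier
transform is `𝓕 Φ k = (i / 2) cot (π k / b)`. Orthogonality of characters gives
`∑ₖ 𝓕 Φ (a k) 𝓕 Φ k = b ∑ⱼ Φ j Φ (-a j)`; as `Φ` is odd the right side is `-b s(a, b)`, while the
left side is `-(1/4) ∑ₖ cot (π k a / b) cot (π k / b)`.
-/

open Finset Complex ZMod
open scoped Real

lemma saw_intCast (m : ℤ) : saw m = 0 := by simp [saw]

lemma saw_zero : saw 0 = 0 := by simpa using saw_intCast 0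

lemma saw_of_mem_Ioo {x : ℝ} (h0 : 0 < x) (h1 : x < 1) : saw x = x - 1 / 2 := by
  rw [saw, if_neg, Int.fract_eq_self.2 ⟨h0.le, h1⟩]
  rintro ⟨m, rfl⟩
  have : 0 < m := by exact_mod_cast h0
  have : m < 1 := by exact_mod_cast h1
  omega

lemma saw_add_intCast (x : ℝ) (m : ℤ) : saw (x + m) = saw x := by
  have hint : (∃ n : ℤ, (n : ℝ) = x + m) ↔ ∃ n : ℤ, (n : ℝ) = x :=
    ⟨fun ⟨n, h⟩ => ⟨n - m, by push_cast; linarith⟩, fun ⟨n, h⟩ => ⟨n + m, by push_cast; linarith⟩⟩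
  by_cases h : ∃ n : ℤ, (n : ℝ) = x
  · rw [saw, saw, if_pos h, if_pos (hint.2 h)]
  · rw [saw, saw, if_neg h, if_neg (mt hint.1 h), Int.fract_add_intCast]

lemma saw_neg (x : ℝ) : saw (-x) = -saw x := by
  by_cases h : ∃ n : ℤ, (n : ℝ) = x
  · obtain ⟨n, rfl⟩ := h
    rw [← Int.cast_neg, saw_intCast, saw_intCast, neg_zero]
  · have h' : ¬∃ n : ℤ, (n : ℝ) = -x := fun ⟨n, hn⟩ => h ⟨-n, by push_cast; linarith⟩
    have hfract : Int.fract x ≠ 0 := fun hx => h (Int.fract_eq_zero_iff.1 hx)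
    rw [saw, saw, if_neg h, if_neg h', Int.fract_neg hfract]
    ring

lemma sub_one_mul_sum_range_mul_pow {R : Type*} [CommRing R] (z : R) (n : ℕ) :
    (z - 1) * ∑ j ∈ range n, (j : R) * z ^ j = n * z ^ n - z * ∑ j ∈ range n, z ^ j := by
  induction n with
  | zero => simp
  | succ n ih =>
    rw [sum_range_succ, sum_range_succ, mul_add, ih]
    push_cast
    ring

section ZModFourier

variable {N : ℕ} [NeZero N]

lemma sum_range_natCast_zmod {M : Type*} [AddCommMonoid M] (g : ZMod N → M) :
    ∑ k ∈ range N, g k = ∑ x, g x := by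
  obtain ⟨n, rfl⟩ := Nat.exists_eq_succ_of_ne_zero (NeZero.ne N)
  rw [← Fin.sum_univ_eq_sum_range (fun k => g k)]
  exact Fintype.sum_congr _ _ fun x : ZMod (n + 1) => congrArg g (ZMod.natCast_zmod_val x)

lemma sum_dft_mul_left_mul_dft (Φ Ψ : ZMod N → ℂ) (a : ZMod N) :
    ∑ k, 𝓕 Φ (a * k) * 𝓕 Ψ k = N * ∑ j, Φ j * Ψ (-(a * j)) := by
  have horth : ∀ j l : ZMod N, ∑ k, stdAddChar (-(j * (a * k))) * stdAddChar (-(l * k))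
      = if l = -(a * j) then (N : ℂ) else 0 := by
    intro j l
    simp_rw [← AddChar.map_add_eq_mul, show ∀ k, -(j * (a * k)) + -(l * k) = k * -(a * j + l) by
      intro k; ring]
    simp only [AddChar.sum_mulShift _ (isPrimitive_stdAddChar N), ZMod.card, neg_eq_zero,
      add_eq_zero_iff_eq_neg']
    push_cast
    rfl
  calc ∑ k, 𝓕 Φ (a * k) * 𝓕 Ψ k
      = ∑ j, ∑ l, Φ j * Ψ l * ∑ k, stdAddChar (-(j * (a * k))) * stdAddChar (-(l * k)) := by
        simp only [dft_apply, smul_eq_mul]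
        simp_rw [sum_mul_sum, mul_sum]
        exact sum_comm.trans <| sum_congr rfl fun j _ => sum_comm.trans <|
          sum_congr rfl fun l _ => sum_congr rfl fun k _ => by ring
    _ = N * ∑ j, Φ j * Ψ (-(a * j)) := by
        simp only [horth, mul_ite, mul_zero, sum_ite_eq', mem_univ, if_true, mul_sum]
        exact sum_congr rfl fun j _ => by ring

end ZModFourier

section ZModSawtooth

variable {b : ℕ} [NeZero b]

lemma sum_range_pow_mul_saw {z : ℂ} (hzb : z ^ b = 1) (hz1 : z ≠ 1) :
    ∑ j ∈ range b, z ^ j * saw (j / b) = (z + 1) / (2 * (z - 1)) := by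
  have hb : (b : ℂ) ≠ 0 := NeZero.ne _
  have hz : z - 1 ≠ 0 := sub_ne_zero.2 hz1
  have hgeom : ∑ j ∈ range b, z ^ j = 0 := by rw [geom_sum_eq hz1, hzb, sub_self, zero_div]
  have hweighted : ∑ j ∈ range b, (j : ℂ) * z ^ j = b / (z - 1) := by
    rw [eq_div_iff hz, mul_comm, sub_one_mul_sum_range_mul_pow, hzb, hgeom]
    ring
  have hterm : ∀ j ∈ range b, z ^ j * saw (j / b)
      = (1 / b : ℂ) * (j * z ^ j) - 1 / 2 * z ^ j + if j = 0 then 1 / 2 else 0 := by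
    intro j hj
    rcases Nat.eq_zero_or_pos j with rfl | hj0
    · simp [saw_zero]
    · have hbpos : (0 : ℝ) < b := by exact_mod_cast Nat.pos_of_neZero b
      have hjpos : (0 : ℝ) < j := by exact_mod_cast hj0
      have hjb : (j : ℝ) / b < 1 := (div_lt_one hbpos).2 (by exact_mod_cast mem_range.1 hj)
      rw [saw_of_mem_Ioo (div_pos hjpos hbpos) hjb, if_neg hj0.ne']
      push_cast
      ring
  rw [sum_congr rfl hterm, sum_add_distrib, sum_sub_distrib, ← mul_sum, ← mul_sum, hweighted,
    hgeom, sum_ite_eq' _ _ _, if_pos (mem_range.2 (Nat.pos_of_neZero b))]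
  field_simp
  ring

variable (b) in
noncomputable def sawZMod (j : ZMod b) : ℂ := saw (j.val / b)

lemma sawZMod_intCast (m : ℤ) : sawZMod b m = saw (m / b) := by
  have hb : (b : ℝ) ≠ 0 := NeZero.ne _
  have hdiv : (m : ℝ) / b = ((m % b : ℤ) : ℝ) / b + ((m / b : ℤ) : ℝ) := by
    have hm : ((m % b : ℤ) : ℝ) + b * ((m / b : ℤ) : ℝ) = m := by
      exact_mod_cast Int.emod_add_mul_ediv m b
    rw [← hm, add_div, mul_div_cancel_left₀ _ hb]
  rw [sawZMod, hdiv, saw_add_intCast, ← ZMod.val_intCast, Int.cast_natCast]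

lemma sawZMod_natCast (n : ℕ) : sawZMod b n = saw (n / b) := by
  simpa using sawZMod_intCast (b := b) n

lemma sawZMod_neg (x : ZMod b) : sawZMod b (-x) = -sawZMod b x := by
  rw [← ZMod.natCast_zmod_val x, ← Int.cast_natCast, ← Int.cast_neg, sawZMod_intCast,
    sawZMod_intCast, Int.cast_neg, neg_div, saw_neg, ofReal_neg]

lemma sum_sawZMod : ∑ x, sawZMod b x = 0 := by
  have h : ∑ x, sawZMod b x = -∑ x, sawZMod b x := by
    rw [← sum_neg_distrib]
    exact Fintype.sum_equiv (Equiv.neg _) _ _ fun x => by rw [Equiv.neg_apply, sawZMod_neg, neg_neg]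
  linear_combination h / 2

-- At `k = 0` the right side is `2 / 0 = 0`, matching `∑ j, sawZMod b j = 0`.
lemma dft_sawZMod (k : ZMod b) :
    𝓕 (sawZMod b) k = (stdAddChar (-k) + 1) / (2 * (stdAddChar (-k) - 1)) := by
  by_cases hk : k = 0
  · rw [hk, dft_apply_zero, sum_sawZMod, neg_zero, AddChar.map_zero_eq_one]
    simp
  have hz1 : stdAddChar (-k) ≠ 1 := by
    rw [← AddChar.map_zero_eq_one (stdAddChar (N := b)), injective_stdAddChar.ne_iff]
    exact neg_ne_zero.2 hk
  have hzb : stdAddChar (-k) ^ b = 1 := by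
    rw [← AddChar.map_nsmul_eq_pow, nsmul_eq_mul, ZMod.natCast_self, zero_mul,
      AddChar.map_zero_eq_one]
  rw [dft_apply, ← sum_range_natCast_zmod, ← sum_range_pow_mul_saw hzb hz1]
  refine sum_congr rfl fun j _ => ?_
  rw [sawZMod_natCast, smul_eq_mul, ← AddChar.map_nsmul_eq_pow, nsmul_eq_mul, mul_neg]

-- When `b ∣ n` both sides are `0`, as `Real.cot` takes the value `0` at its poles.
lemma dft_sawZMod_natCast (n : ℕ) :
    𝓕 (sawZMod b) n = I / 2 * Real.cot (π * n / b) := by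
  have harg : ((π * n / b : ℝ) : ℂ) = π * (n / b) := by push_cast; ring
  have hz : stdAddChar (-(n : ZMod b)) = (exp (2 * π * I * (n / b)))⁻¹ := by
    rw [← Int.cast_natCast, ← Int.cast_neg, stdAddChar_coe, ← exp_neg]
    push_cast
    ring_nf
  rw [dft_sawZMod, hz, ofReal_cot, harg, cot_pi_eq_exp_ratio]
  set w := exp (2 * π * I * (n / b))
  have hw : w ≠ 0 := exp_ne_zero _
  by_cases hw1 : w = 1
  · simp [hw1]
  field_simp
  ring

lemma natCast_mul_sum_saw_mul_saw (a : ℕ) :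
    (b : ℂ) * ∑ k ∈ range b, (saw (k * a / b) : ℂ) * saw (k / b)
      = -∑ x, 𝓕 (sawZMod b) (a * x) * 𝓕 (sawZMod b) x := by
  rw [sum_dft_mul_left_mul_dft, ← sum_range_natCast_zmod]
  simp only [sawZMod_neg, ← Nat.cast_mul, sawZMod_natCast, mul_neg, sum_neg_distrib, neg_neg]
  push_cast
  exact congrArg _ (sum_congr rfl fun k _ => by rw [mul_comm (a : ℝ), mul_comm])

lemma sum_dft_sawZMod_mul_left_mul_dft (a : ℕ) :
    ∑ x, 𝓕 (sawZMod b) (a * x) * 𝓕 (sawZMod b) x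
      = -(1 / 4) * ∑ k ∈ Ico 1 b, (Real.cot (π * k * a / b) : ℂ) * Real.cot (π * k / b) := by
  rw [← sum_range_natCast_zmod, range_eq_Ico, sum_eq_sum_Ico_succ_bot (Nat.pos_of_neZero b),
    Nat.cast_zero, mul_zero, dft_apply_zero, sum_sawZMod, zero_mul, zero_add, mul_sum]
  refine sum_congr rfl fun k _ => ?_
  rw [← Nat.cast_mul, mul_comm a k, dft_sawZMod_natCast, dft_sawZMod_natCast, Nat.cast_mul,
    ← mul_assoc π]
  linear_combination (1 / 4 * Real.cot (π * k * a / b) * Real.cot (π * k / b) : ℂ) * I_sq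

end ZModSawtooth

theorem dedekindSum_eq_neg_quarter_zagier_general (a b : ℕ) (hb : 0 < b) :
    ∑ k ∈ Finset.range b, saw (k * a / b) * saw (k / b) =
      1 / (4 * b) * ∑ k ∈ Finset.Ico 1 b,
        Real.cot (Real.pi * k * a / b) * Real.cot (Real.pi * k / b) := by
  have : NeZero b := ⟨hb.ne'⟩
  have hC : ∑ k ∈ Ico 1 b, (Real.cot (π * k * a / b) : ℂ) * Real.cot (π * k / b)
      = 4 * b * ∑ k ∈ range b, (saw (k * a / b) : ℂ) * saw (k / b) := by
    rw [mul_assoc, natCast_mul_sum_saw_mul_saw, sum_dft_sawZMod_mul_left_mul_dft]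
    ring
  have hR : ∑ k ∈ Ico 1 b, Real.cot (π * k * a / b) * Real.cot (π * k / b)
      = 4 * b * ∑ k ∈ range b, saw (k * a / b) * saw (k / b) := by
    apply ofReal_injective
    simpa only [ofReal_mul, ofReal_sum, ofReal_natCast, ofReal_ofNat] using hC
  have hb' : (4 * b : ℝ) ≠ 0 := mul_ne_zero four_ne_zero (NeZero.ne _)
  rw [hR, ← mul_assoc, one_div_mul_cancel hb', one_mul]

theorem dedekindSum_eq_neg_quarter_zagier (a b : ℕ) (ha : 0 < a) (hb : 0 < b)
    (hab : Nat.Coprime a b) :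
    ∑ k ∈ Finset.range b, saw (k * a / b) * saw (k / b) =
      1 / (4 * b) * ∑ k ∈ Finset.Ico 1 b,
        Real.cot (Real.pi * k * a / b) * Real.cot (Real.pi * k / b) :=
  dedekindSum_eq_neg_quarter_zagier_general a b hb
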